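/- arXiv:0706.1862 — 3 statements merged into one kernel-verified Lean document; each statement's English description precedes it below -/
import Mathlib

section
/- Consider the diagonal-quadratic system $x_i^2 = m_i \cdot x + \mu_i$ for $i=1,\dots,N$, where $m_i \in \mathbb{C}^N$ is a row vector and $\mu_i \in \mathbb{C}$. The set of solutions $x \in \mathbb{C}^N$ of this system is finite. -/
open MvPolynomial

set_option maxHeartbeats 1000000 in
set_option synthInstance.maxHeartbeats 400000 in
theorem stmt_3 (N : ℕ) (M : Matrix (Fin N) (Fin N) ℂ) (μ : Fin N → ℂ) :
    {x : Fin N → ℂ | ∀ i : Fin N, x i ^ 2 = (∑ j : Fin N, M i j * x j) + μ i}.Finite := by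
  classical
  set g : Fin N → MvPolynomial (Fin N) ℂ :=
    fun i => X i ^ 2 - (∑ j, C (M i j) * X j) - C (μ i) with hg
  set I : Ideal (MvPolynomial (Fin N) ℂ) := Ideal.span (Set.range g) with hI
  set S : Set (MvPolynomial (Fin N) ℂ) :=
    (fun d : Fin N →₀ ℕ => (monomial d (1:ℂ))) '' {d | ∀ i, d i ≤ 1} with hS
  have hSfin : S.Finite := by
    apply Set.Finite.image
    have h1 : {d : Fin N →₀ ℕ | ∀ i, d i ≤ 1}
        = (⇑Finsupp.equivFunOnFinite) ⁻¹' (Set.pi Set.univ fun _ : Fin N => Set.Iic 1) := by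
      ext d; simp [Set.mem_pi, Finsupp.equivFunOnFinite, Pi.le_def]
    rw [h1]
    exact Set.Finite.preimage (Equiv.injective _).injOn
      (Set.Finite.pi fun _ => Set.finite_Iic 1)
  set W : Submodule ℂ (MvPolynomial (Fin N) ℂ) :=
    Submodule.restrictScalars ℂ I ⊔ Submodule.span ℂ S with hW
  have key : ∀ n : ℕ, ∀ d : Fin N →₀ ℕ, (∑ i, d i) ≤ n → (monomial d (1:ℂ)) ∈ W := by
    intro n
    induction n with
    | zero =>
      intro d hd
      apply Submodule.mem_sup_right
      apply Submodule.subset_span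
      refine ⟨d, fun i => ?_, rfl⟩
      have h0 : d i ≤ ∑ j, d j :=
        Finset.single_le_sum (f := fun j => d j) (fun j _ => Nat.zero_le _) (Finset.mem_univ i)
      omega
    | succ n ih =>
      intro d hd
      by_cases hcase : ∀ i, d i ≤ 1
      · exact Submodule.mem_sup_right (Submodule.subset_span ⟨d, hcase, rfl⟩)
      · push_neg at hcase
        obtain ⟨i, hi⟩ := hcase
        have hi2 : 2 ≤ d i := hi
        set d' : Fin N →₀ ℕ := d - Finsupp.single i 2 with hd'
        have hle : Finsupp.single i 2 ≤ d := by
          rw [Finsupp.single_le_iff]; exact hi2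
        have hdd : d' + Finsupp.single i 2 = d := tsub_add_cancel_of_le hle
        have hdeg : (∑ j, d' j) + 2 = ∑ j, d j := by
          have h2 := congrArg (fun e : Fin N →₀ ℕ => ∑ j, e j) hdd
          simp only [Finsupp.add_apply, Finset.sum_add_distrib] at h2
          have hsing : ∑ j, (Finsupp.single i 2 : Fin N →₀ ℕ) j = 2 := by
            simp [Finsupp.single_apply]
          omega
        have hmul : (monomial d (1:ℂ)) = monomial d' 1 * X i ^ 2 := by
          rw [X_pow_eq_monomial, monomial_mul, one_mul, hdd]
        have hXi : (X i : MvPolynomial (Fin N) ℂ)^2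
            = g i + ((∑ j, C (M i j) * X j) + C (μ i)) := by
          rw [hg]; ring
        rw [hmul, hXi, mul_add, mul_add]
        apply Submodule.add_mem
        · apply Submodule.mem_sup_left
          exact Ideal.mul_mem_left I _ (Ideal.subset_span ⟨i, rfl⟩)
        · apply Submodule.add_mem
          · rw [Finset.mul_sum]
            apply Submodule.sum_mem
            intro j _
            have hXj : (X j : MvPolynomial (Fin N) ℂ) = monomial (Finsupp.single j 1) 1 := by
              rw [← X_pow_eq_monomial, pow_one]
            have heq : (monomial d' (1:ℂ)) * (C (M i j) * X j)
                = (M i j) • (monomial (d' + Finsupp.single j 1) (1:ℂ)) := by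
              rw [hXj, smul_monomial, mul_left_comm, monomial_mul, C_mul_monomial]
              simp
            rw [heq]
            apply Submodule.smul_mem
            apply ih
            have h3 := congrArg (fun e : Fin N →₀ ℕ => ∑ k, e k)
              (rfl : d' + Finsupp.single j 1 = d' + Finsupp.single j 1)
            have h4 : ∑ k, ((d' + Finsupp.single j 1 : Fin N →₀ ℕ)) k
                = (∑ k, d' k) + (∑ k, (Finsupp.single j 1 : Fin N →₀ ℕ) k) := by
              simp only [Finsupp.add_apply, Finset.sum_add_distrib]
            have hsing : ∑ k, (Finsupp.single j 1 : Fin N →₀ ℕ) k = 1 := by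
              simp [Finsupp.single_apply]
            omega
          · have heq : (monomial d' (1:ℂ)) * C (μ i) = (μ i) • monomial d' 1 := by
              rw [mul_comm, C_mul_monomial, smul_monomial, smul_eq_mul]
            rw [heq]
            apply Submodule.smul_mem
            apply ih
            omega
  have hWtop : W = ⊤ := by
    rw [eq_top_iff]
    intro p _
    have hp : p = ∑ v ∈ p.support, monomial v (coeff v p) :=
      (support_sum_monomial_coeff p).symm
    rw [hp]
    apply Submodule.sum_mem
    intro v _
    have : (monomial v (coeff v p) : MvPolynomial (Fin N) ℂ) = (coeff v p) • monomial v 1 := by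
      rw [smul_monomial, smul_eq_mul, mul_one]
    rw [this]
    exact Submodule.smul_mem _ _ (key _ v le_rfl)
  set mkA : MvPolynomial (Fin N) ℂ →ₐ[ℂ] (MvPolynomial (Fin N) ℂ ⧸ I) :=
    Ideal.Quotient.mkₐ ℂ I with hmkA
  have htop : Submodule.span ℂ (mkA '' S) = ⊤ := by
    rw [eq_top_iff]
    intro y _
    obtain ⟨p, rfl⟩ := Ideal.Quotient.mkₐ_surjective ℂ I y
    have hp : p ∈ W := hWtop ▸ Submodule.mem_top
    rw [hW, Submodule.mem_sup] at hp
    obtain ⟨a, ha, b, hb, rfl⟩ := hp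
    have ha0 : mkA a = 0 := by
      rw [hmkA]
      simpa [Ideal.Quotient.mkₐ_eq_mk, Ideal.Quotient.eq_zero_iff_mem] using ha
    rw [map_add, ha0, zero_add]
    exact Submodule.apply_mem_span_image_of_mem_span mkA.toLinearMap hb
  haveI : Module.Finite ℂ (MvPolynomial (Fin N) ℂ ⧸ I) := by
    refine ⟨⟨(hSfin.image mkA).toFinset, ?_⟩⟩
    rw [Set.Finite.coe_toFinset]
    exact htop
  choose q hqmonic hqzero using fun i : Fin N =>
    IsIntegral.of_finite ℂ (mkA (X i))
  have hroots : ∀ x ∈ {x : Fin N → ℂ | ∀ i : Fin N,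
      x i ^ 2 = (∑ j : Fin N, M i j * x j) + μ i}, ∀ i, (q i).IsRoot (x i) := by
    intro x hx i
    set φ : MvPolynomial (Fin N) ℂ →ₐ[ℂ] ℂ := MvPolynomial.aeval x with hφ
    have hφI : I ≤ RingHom.ker φ.toRingHom := by
      rw [hI, Ideal.span_le]
      rintro _ ⟨k, rfl⟩
      simp only [SetLike.mem_coe, RingHom.mem_ker, AlgHom.toRingHom_eq_coe,
        RingHom.coe_coe, hφ, hg]
      have hxk := hx k
      simp only [map_sub, map_sum, map_mul, map_pow, aeval_X, aeval_C,
        Algebra.algebraMap_self, RingHom.id_apply]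
      rw [hxk]
      ring
    set ψ : (MvPolynomial (Fin N) ℂ ⧸ I) →ₐ[ℂ] ℂ := Ideal.Quotient.liftₐ I φ (fun a ha => by
      simpa using hφI ha) with hψ
    have hcomm : ψ (mkA (X i)) = x i := by
      rw [hψ, hmkA]
      simp [Ideal.Quotient.liftₐ_apply, Ideal.Quotient.mkₐ_eq_mk, hφ]
    have hz : Polynomial.aeval (mkA (X i)) (q i) = 0 := by
      rw [Polynomial.aeval_def]; exact hqzero i
    have h0 : Polynomial.aeval (ψ (mkA (X i))) (q i) = 0 := by
      rw [Polynomial.aeval_algHom_apply, hz, map_zero]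
    rw [hcomm] at h0
    simpa [Polynomial.IsRoot, ← Polynomial.coe_aeval_eq_eval] using h0
  have hsub : {x : Fin N → ℂ | ∀ i : Fin N, x i ^ 2 = (∑ j : Fin N, M i j * x j) + μ i}
      ⊆ Set.pi Set.univ (fun i => {z : ℂ | (q i).IsRoot z}) := by
    intro x hx
    intro i _
    exact hroots x hx i
  exact Set.Finite.subset (Set.Finite.pi fun i =>
    Polynomial.finite_setOf_isRoot ((hqmonic i).ne_zero)) hsub
end

section
/- Let $I \subseteq \mathbb{C}[x_1,\dots,x_N]$ be an ideal with finite-dimensional quotient $\mathcal{V}$, $X_i$ the multiplication operators, and $f \in \mathbb{C}[x_1,\dots,x_N]$. Then the set of eigenvalues of the endomorphism $f(X_1,\dots,X_N)$ of $\mathcal{V}$ contains $\{f(\xi) : \xi \text{ a common zero of } I\}$. -/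
theorem stmt_10 (N : ℕ) (I : Ideal (MvPolynomial (Fin N) ℂ))
    (hfin : Module.Finite ℂ (MvPolynomial (Fin N) ℂ ⧸ I))
    (f : MvPolynomial (Fin N) ℂ)
    (Fmap : (MvPolynomial (Fin N) ℂ ⧸ I) →ₗ[ℂ] (MvPolynomial (Fin N) ℂ ⧸ I))
    (hF : ∀ g : MvPolynomial (Fin N) ℂ,
      Fmap (Ideal.Quotient.mk I g) = Ideal.Quotient.mk I (f * g))
    (ξ : Fin N → ℂ) (hξ : ∀ g ∈ I, MvPolynomial.eval ξ g = 0) :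
    Module.End.HasEigenvalue Fmap (MvPolynomial.eval ξ f) := by
  set μ := MvPolynomial.eval ξ f
  rw [Module.End.hasEigenvalue_iff, Module.End.eigenspace_def, Ne,
    LinearMap.ker_eq_bot]
  intro hinj
  have hsurj := (LinearMap.injective_iff_surjective (f := Fmap - μ • 1)).mp hinj
  obtain ⟨v, hv⟩ := hsurj (Ideal.Quotient.mk I 1)
  obtain ⟨g, rfl⟩ := Ideal.Quotient.mk_surjective v
  have hval : (Fmap - μ • 1) (Ideal.Quotient.mk I g)
      = Ideal.Quotient.mk I ((f - MvPolynomial.C μ) * g) := by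
    simp only [LinearMap.sub_apply, LinearMap.smul_apply, Module.End.one_apply, hF]
    rw [sub_mul, map_sub]
    congr 1
    rw [map_mul,
      show (Ideal.Quotient.mk I) (MvPolynomial.C μ) = algebraMap ℂ _ μ from rfl,
      ← Algebra.smul_def]
  rw [hval, Ideal.Quotient.eq] at hv
  have := hξ _ hv
  simp [μ] at this
end

section
/- Let $d$ be a monic real polynomial of degree $N$ with distinct roots $\delta_1,\dots,\delta_N$, all in the open left half-plane, and let $a$ be a monic real polynomial of degree $N-1$ with $d(-\delta_i) \neq 0$ for all $i$. Then $\frac{1}{2\pi}\int_{-\infty}^{\infty} \frac{a(-i\omega)\, a(i\omega)}{d(i\omega)\, d(-i\omega)}\, d\omega = \sum_{i=1}^{N} \frac{a(-\delta_i)\, a(\delta_i)}{d'(\delta_i)\, d(-\delta_i)}$. -/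
/-!
The rational function `a(-s) a(s) / (d(s) d(-s))` has numerator degree below the degree `2N` of
its denominator, whose roots `±δᵢ` are simple, so Lagrange interpolation at these roots splits it
into simple fractions. The residues at `δᵢ` and `-δᵢ` are opposite, so on the imaginary axis the
integrand is `∑ᵢ rᵢ ((iω - δᵢ)⁻¹ - (iω + δᵢ)⁻¹)`, with `rᵢ` the summands on the right-hand side.
Each bracket is `-i ((ω - w)⁻¹ - (ω - w')⁻¹)` with `w = -iδᵢ` in the upper and `w' = iδᵢ` in the
lower half-plane; its primitive `log (ω - w) - log (ω - w')` tends to `0` at `+∞` and to `-2πi` at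
`-∞`, since `ω - w` and `ω - w'` approach the negative real axis from opposite sides. Hence each
bracket integrates to `2π`.
-/

open Polynomial Complex MeasureTheory Filter Topology

namespace Polynomial

variable {F : Type*} [Field F] {ι : Type*} [Fintype ι]

theorem eq_C_leadingCoeff_mul_prod_X_sub_C {p : F[X]} {v : ι → F} (hv : Function.Injective v)
    (hroots : ∀ i, p.IsRoot (v i)) (hdeg : p.natDegree ≤ Fintype.card ι) :
    p = C p.leadingCoeff * ∏ i, (X - C (v i)) := by
  refine eq_leadingCoeff_mul_of_monic_of_dvd_of_natDegree_le
    (monic_prod_of_monic _ _ fun i _ => monic_X_sub_C (v i))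
    (Fintype.prod_dvd_of_coprime (pairwise_coprime_X_sub_C hv)
      fun i => dvd_iff_isRoot.2 (hroots i)) ?_
  simpa [natDegree_prod_of_monic _ _ fun i _ => monic_X_sub_C (v i)] using hdeg

theorem eval_div_eq_sum_div_derivative [DecidableEq ι] {v : ι → F} (hv : Function.Injective v)
    {c : F} {E f : F[X]} (hE : E = C c * ∏ i, (X - C (v i)))
    (hf : f.degree < Fintype.card ι) {z : F} (hz : ∀ i, z ≠ v i) :
    f.eval z / E.eval z = ∑ i, f.eval (v i) / (E.derivative.eval (v i) * (z - v i)) := by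
  have hzs : ∀ i ∈ Finset.univ, z ≠ v i := fun i _ => hz i
  rw [hE, ← Lagrange.nodal_eq]
  nth_rewrite 1 [Lagrange.eq_interpolate hv.injOn hf]
  rw [Lagrange.eval_interpolate_not_at_node _ hzs, derivative_C_mul, eval_mul, eval_C,
    Finset.mul_sum, Finset.sum_div]
  have hnodal := Lagrange.eval_nodal_not_at_node hzs
  refine Finset.sum_congr rfl fun i _ => ?_
  rw [Lagrange.nodalWeight_eq_eval_derivative_nodal (Finset.mem_univ i), eval_mul, eval_C]
  field_simp

theorem comp_neg_X_eq_C_mul_prod {D : F[X]} {δ : ι → F} {c : F}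
    (hD : D = C c * ∏ i, (X - C (δ i))) :
    D.comp (-X) = C (c * (-1) ^ Fintype.card ι) * ∏ i, (X - C (-δ i)) := by
  have h : ∀ i, (X - C (δ i)).comp (-X) = -(X - C (-δ i)) := fun i => by
    simp only [sub_comp, X_comp, C_comp, map_neg]; ring
  rw [hD, mul_comp, C_comp, prod_comp, Finset.prod_congr rfl fun i _ => h i, Finset.prod_neg]
  simp only [C_mul, C_pow, C_neg, C_1, Finset.card_univ, mul_assoc]

theorem eval_neg_mul_eval_div_eval_mul_eval_neg [DecidableEq ι] {D A : F[X]} {δ : ι → F}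
    (hδ : Function.Injective δ) (hsep : ∀ i j, δ i ≠ -δ j) {c : F}
    (hD : D = C c * ∏ i, (X - C (δ i))) (hA : A.natDegree < Fintype.card ι) {z : F}
    (hz : ∀ i, z ≠ δ i) (hz' : ∀ i, z ≠ -δ i) :
    A.eval (-z) * A.eval z / (D.eval z * D.eval (-z)) =
      ∑ i, A.eval (-δ i) * A.eval (δ i) / (D.derivative.eval (δ i) * D.eval (-δ i)) *
        ((z - δ i)⁻¹ - (z + δ i)⁻¹) := by
  set v : ι ⊕ ι → F := Sum.elim δ fun i => -δ i
  have hv : Function.Injective v :=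
    hδ.sumElim (neg_injective.comp hδ) fun i j => hsep i j
  have hE : D * D.comp (-X) = C (c * (c * (-1) ^ Fintype.card ι)) * ∏ k, (X - C (v k)) := by
    rw [comp_neg_X_eq_C_mul_prod hD, Fintype.prod_sum_type, hD]
    simp only [v, Sum.elim_inl, Sum.elim_inr, C_mul]
    ring
  have hf : (A.comp (-X) * A).degree < Fintype.card (ι ⊕ ι) := by
    have h := natDegree_mul_le (p := A.comp (-X)) (q := A)
    rw [natDegree_comp, natDegree_neg, natDegree_X, mul_one] at h
    refine degree_le_natDegree.trans_lt ?_
    rw [Fintype.card_sum]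
    exact_mod_cast (by omega)
  have hroot : ∀ i, D.eval (δ i) = 0 := fun i => by
    rw [hD, eval_mul, eval_prod, Finset.prod_eq_zero (Finset.mem_univ i) (by simp), mul_zero]
  have key := eval_div_eq_sum_div_derivative hv hE hf (z := z) (Sum.forall.2 ⟨hz, hz'⟩)
  simp only [eval_mul, eval_comp, eval_neg, eval_X, Fintype.sum_sum_type, derivative_mul,
    derivative_comp, eval_add, derivative_neg, derivative_X, v, Sum.elim_inl, Sum.elim_inr,
    hroot, neg_neg, eval_one] at key
  rw [key, ← Finset.sum_add_distrib]
  refine Finset.sum_congr rfl fun i _ => ?_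
  simp only [mul_zero, zero_mul, zero_add, sub_neg_eq_add, div_eq_mul_inv, mul_inv,
    neg_one_mul, mul_neg, inv_neg]
  ring

end Polynomial

theorem Complex.sq_norm_ofReal_sub (x : ℝ) (w : ℂ) :
    ‖(x : ℂ) - w‖ ^ 2 = (x - w.re) ^ 2 + w.im ^ 2 := by
  rw [Complex.sq_norm, normSq_apply]
  simp only [sub_re, ofReal_re, sub_im, ofReal_im]
  ring

theorem Complex.ofReal_sub_ne_zero_of_im_ne_zero {w : ℂ} (hw : w.im ≠ 0) (x : ℝ) :
    (x : ℂ) - w ≠ 0 := fun h => hw (by simpa using congrArg im h)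

theorem integrable_inv_sub_sq_add_sq (a : ℝ) {b : ℝ} (hb : b ≠ 0) :
    Integrable fun x : ℝ => ((x - a) ^ 2 + b ^ 2)⁻¹ := by
  refine (((integrable_inv_one_add_sq.comp_div hb).comp_sub_right a).const_mul (b ^ 2)⁻¹).congr
    (.of_forall fun x => ?_)
  field_simp
  ring

theorem memLp_two_inv_ofReal_sub {w : ℂ} (hw : w.im ≠ 0) :
    MemLp (fun x : ℝ => ((x : ℂ) - w)⁻¹) 2 := by
  have hcont : Continuous fun x : ℝ => ((x : ℂ) - w)⁻¹ :=
    (continuous_ofReal.sub continuous_const).inv₀ (ofReal_sub_ne_zero_of_im_ne_zero hw)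
  rw [memLp_two_iff_integrable_sq_norm hcont.aestronglyMeasurable]
  simpa only [norm_inv, inv_pow, sq_norm_ofReal_sub] using integrable_inv_sub_sq_add_sq w.re hw

-- Each inverse alone decays like `1 / x` only, but their product is integrable by Hölder.
theorem integrable_inv_ofReal_sub_sub_inv {w w' : ℂ} (hw : w.im ≠ 0) (hw' : w'.im ≠ 0) :
    Integrable fun x : ℝ => ((x : ℂ) - w)⁻¹ - ((x : ℂ) - w')⁻¹ := by
  refine (((memLp_two_inv_ofReal_sub hw).integrable_mul (memLp_two_inv_ofReal_sub hw')).const_mul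
    (w - w')).congr (.of_forall fun x => ?_)
  have := ofReal_sub_ne_zero_of_im_ne_zero hw x
  have := ofReal_sub_ne_zero_of_im_ne_zero hw' x
  simp only [Pi.mul_apply]
  field_simp
  ring

theorem hasDerivAt_log_ofReal_sub {w : ℂ} (hw : w.im ≠ 0) (x : ℝ) :
    HasDerivAt (fun x : ℝ => log ((x : ℂ) - w)) ((x : ℂ) - w)⁻¹ x := by
  have h := ((hasDerivAt_id x).ofReal_comp.sub_const w).clog_real (Or.inr (by simpa using hw))
  simpa [div_eq_mul_inv] using h

theorem log_ofReal_sub_of_pos {w : ℂ} (hw : w.im ≠ 0) {x : ℝ} (hx : 0 < x) :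
    log ((x : ℂ) - w) = Real.log x + log (1 - w / x) := by
  have hx' : (x : ℂ) ≠ 0 := ofReal_ne_zero.2 hx.ne'
  have hsplit : (x : ℂ) - w = (x : ℝ) * (1 - w / x) := by field_simp
  have hne : 1 - w / x ≠ 0 := fun h =>
    ofReal_sub_ne_zero_of_im_ne_zero hw x (by rw [hsplit, h, mul_zero])
  rw [hsplit, log_ofReal_mul hx hne, ofReal_log hx.le]

theorem log_ofReal_sub_of_neg {w : ℂ} (hw : w.im ≠ 0) {x : ℝ} (hx : x < 0) :
    log ((x : ℂ) - w) = Real.log (-x) + log (-1 + w / x) := by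
  have hx' : (x : ℂ) ≠ 0 := ofReal_ne_zero.2 hx.ne
  have hsplit : (x : ℂ) - w = (-x : ℝ) * (-1 + w / x) := by push_cast; field_simp; ring
  have hne : -1 + w / x ≠ 0 := fun h =>
    ofReal_sub_ne_zero_of_im_ne_zero hw x (by rw [hsplit, h, mul_zero])
  rw [hsplit, log_ofReal_mul (neg_pos.2 hx) hne, ofReal_log (neg_pos.2 hx).le]

theorem tendsto_div_ofReal {l : Filter ℝ} (hl : Tendsto (fun x : ℝ => x⁻¹) l (𝓝 0)) (w : ℂ) :
    Tendsto (fun x : ℝ => w / x) l (𝓝 0) := by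
  simpa [div_eq_mul_inv] using ((continuous_ofReal.tendsto 0).comp hl).const_mul w

theorem tendsto_log_ofReal_sub_sub_log_atTop {w : ℂ} (hw : w.im ≠ 0) :
    Tendsto (fun x : ℝ => log ((x : ℂ) - w) - Real.log x) atTop (𝓝 0) := by
  have h : Tendsto (fun x : ℝ => log (1 - w / x)) atTop (𝓝 0) := by
    simpa using ((tendsto_div_ofReal tendsto_inv_atTop_zero w).const_sub 1).clog (by simp)
  refine h.congr' ?_
  filter_upwards [eventually_gt_atTop 0] with x hx
  rw [log_ofReal_sub_of_pos hw hx, add_sub_cancel_left]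

theorem tendsto_neg_one_add_div_ofReal_atBot {w : ℂ} {s : Set ℂ}
    (hs : ∀ x : ℝ, x < 0 → -1 + w / x ∈ s) :
    Tendsto (fun x : ℝ => -1 + w / x) atBot (𝓝[s] (-1)) := by
  refine tendsto_nhdsWithin_iff.2 ⟨?_, eventually_lt_atBot 0 |>.mono hs⟩
  simpa using (tendsto_div_ofReal tendsto_inv_atBot_zero w).const_add (-1)

theorem tendsto_log_ofReal_sub_sub_log_neg_atBot_of_im_pos {w : ℂ} (hw : 0 < w.im) :
    Tendsto (fun x : ℝ => log ((x : ℂ) - w) - Real.log (-x)) atBot (𝓝 (-(Real.pi * I))) := by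
  have h : Tendsto (fun x : ℝ => log (-1 + w / x)) atBot (𝓝 (-(Real.pi * I))) := by
    simpa [Function.comp_def] using
      (tendsto_log_nhdsWithin_im_neg_of_re_neg_of_im_zero (z := -1) (by simp) (by simp)).comp
        (tendsto_neg_one_add_div_ofReal_atBot (w := w) fun x hx => by
          simpa [div_ofReal_im] using div_neg_of_pos_of_neg hw hx)
  refine h.congr' ?_
  filter_upwards [eventually_lt_atBot 0] with x hx
  rw [log_ofReal_sub_of_neg hw.ne' hx, add_sub_cancel_left]

theorem tendsto_log_ofReal_sub_sub_log_neg_atBot_of_im_neg {w : ℂ} (hw : w.im < 0) :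
    Tendsto (fun x : ℝ => log ((x : ℂ) - w) - Real.log (-x)) atBot (𝓝 (Real.pi * I)) := by
  have h : Tendsto (fun x : ℝ => log (-1 + w / x)) atBot (𝓝 (Real.pi * I)) := by
    simpa [Function.comp_def] using
      (tendsto_log_nhdsWithin_im_nonneg_of_re_neg_of_im_zero (z := -1) (by simp) (by simp)).comp
        (tendsto_neg_one_add_div_ofReal_atBot (w := w) fun x hx => by
          simpa [div_ofReal_im] using (div_pos_of_neg_of_neg hw hx).le)
  refine h.congr' ?_
  filter_upwards [eventually_lt_atBot 0] with x hx
  rw [log_ofReal_sub_of_neg hw.ne hx, add_sub_cancel_left]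

theorem integral_inv_ofReal_sub_sub_inv {w w' : ℂ} (hw : 0 < w.im) (hw' : w'.im < 0) :
    ∫ x : ℝ, (((x : ℂ) - w)⁻¹ - ((x : ℂ) - w')⁻¹) = 2 * Real.pi * I := by
  have hbot := (tendsto_log_ofReal_sub_sub_log_neg_atBot_of_im_pos hw).sub
    (tendsto_log_ofReal_sub_sub_log_neg_atBot_of_im_neg hw')
  have htop := (tendsto_log_ofReal_sub_sub_log_atTop hw.ne').sub
    (tendsto_log_ofReal_sub_sub_log_atTop hw'.ne)
  simp only [sub_sub_sub_cancel_right, sub_zero] at hbot htop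
  rw [integral_of_hasDerivAt_of_tendsto
    (fun x => (hasDerivAt_log_ofReal_sub hw.ne' x).sub (hasDerivAt_log_ofReal_sub hw'.ne x))
    (integrable_inv_ofReal_sub_sub_inv hw.ne' hw'.ne) hbot htop]
  ring

theorem inv_ofReal_mul_I_sub_sub_inv (ω : ℝ) (δ : ℂ) :
    ((ω : ℂ) * I - δ)⁻¹ - ((ω : ℂ) * I + δ)⁻¹ =
      -I * (((ω : ℂ) - -(I * δ))⁻¹ - ((ω : ℂ) - I * δ)⁻¹) := by
  have h₁ : (ω : ℂ) * I - δ = I * ((ω : ℂ) - -(I * δ)) := by linear_combination (-δ) * I_sq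
  have h₂ : (ω : ℂ) * I + δ = I * ((ω : ℂ) - I * δ) := by linear_combination δ * I_sq
  rw [h₁, h₂, mul_inv, mul_inv, inv_I, ← mul_sub]

theorem integrable_inv_ofReal_mul_I_sub_sub_inv {δ : ℂ} (hδ : δ.re ≠ 0) :
    Integrable fun ω : ℝ => ((ω : ℂ) * I - δ)⁻¹ - ((ω : ℂ) * I + δ)⁻¹ := by
  simp_rw [inv_ofReal_mul_I_sub_sub_inv]
  exact (integrable_inv_ofReal_sub_sub_inv (by simpa using hδ) (by simpa using hδ)).const_mul _

theorem integral_inv_ofReal_mul_I_sub_sub_inv {δ : ℂ} (hδ : δ.re < 0) :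
    ∫ ω : ℝ, (((ω : ℂ) * I - δ)⁻¹ - ((ω : ℂ) * I + δ)⁻¹) = 2 * Real.pi := by
  simp_rw [inv_ofReal_mul_I_sub_sub_inv]
  rw [integral_const_mul, integral_inv_ofReal_sub_sub_inv (by simpa using hδ) (by simpa using hδ)]
  linear_combination (-2 * Real.pi : ℂ) * I_sq

theorem stmt_19_general (N : ℕ) (d a : Polynomial ℝ)
    (hdd : d.natDegree = N)
    (δ : Fin N → ℂ) (hδ : Function.Injective δ)
    (hroots : ∀ i, (d.map (algebraMap ℝ ℂ)).eval (δ i) = 0)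
    (hLHP : ∀ i, (δ i).re < 0)
    (hda : a.natDegree = N - 1) :
    (1 / (2 * Real.pi)) • ∫ ω : ℝ,
      ((a.map (algebraMap ℝ ℂ)).eval (-(ω * Complex.I))
        * (a.map (algebraMap ℝ ℂ)).eval (ω * Complex.I)) /
      ((d.map (algebraMap ℝ ℂ)).eval (ω * Complex.I)
        * (d.map (algebraMap ℝ ℂ)).eval (-(ω * Complex.I)))
    = ∑ i : Fin N,
        ((a.map (algebraMap ℝ ℂ)).eval (-δ i) * (a.map (algebraMap ℝ ℂ)).eval (δ i)) /
        ((d.map (algebraMap ℝ ℂ)).derivative.eval (δ i)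
          * (d.map (algebraMap ℝ ℂ)).eval (-δ i)) := by
  obtain rfl | hN := Nat.eq_zero_or_pos N
  · -- The integrand is constant, so its Bochner integral over `ℝ` is `0`, like the empty sum.
    rw [eq_C_of_natDegree_eq_zero hdd, eq_C_of_natDegree_eq_zero hda]
    simp [Measure.real]
  set D := d.map (algebraMap ℝ ℂ)
  set A := a.map (algebraMap ℝ ℂ)
  have hD : D = C D.leadingCoeff * ∏ i, (X - C (δ i)) :=
    eq_C_leadingCoeff_mul_prod_X_sub_C hδ hroots (by simp [D, hdd])
  have hA : A.natDegree < Fintype.card (Fin N) := by simp [A, hda]; omega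
  have hsep : ∀ i j, δ i ≠ -δ j := fun i j h => by
    linarith [hLHP i, hLHP j, congrArg re h, neg_re (δ j)]
  have hz : ∀ (ω : ℝ) i, (ω : ℂ) * I ≠ δ i ∧ (ω : ℂ) * I ≠ -δ i := fun ω i => by
    constructor <;> intro h <;> have := congrArg re h <;> simp at this <;> linarith [hLHP i]
  have hpoint : ∀ ω : ℝ, A.eval (-(ω * I)) * A.eval (ω * I) / (D.eval (ω * I) * D.eval (-(ω * I)))
      = ∑ i, A.eval (-δ i) * A.eval (δ i) / (D.derivative.eval (δ i) * D.eval (-δ i)) *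
        (((ω : ℂ) * I - δ i)⁻¹ - ((ω : ℂ) * I + δ i)⁻¹) := fun ω =>
    eval_neg_mul_eval_div_eval_mul_eval_neg hδ hsep hD hA
      (fun i => (hz ω i).1) (fun i => (hz ω i).2)
  simp_rw [hpoint]
  rw [integral_finsetSum _ fun i _ =>
    (integrable_inv_ofReal_mul_I_sub_sub_inv (hLHP i).ne).const_mul _]
  simp_rw [integral_const_mul, integral_inv_ofReal_mul_I_sub_sub_inv (hLHP _)]
  rw [← Finset.sum_mul, real_smul]
  push_cast
  field_simp

theorem stmt_19 (N : ℕ) (d a : Polynomial ℝ)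
    (hdmonic : d.Monic) (hdd : d.natDegree = N)
    (δ : Fin N → ℂ) (hδ : Function.Injective δ)
    (hroots : ∀ i, (d.map (algebraMap ℝ ℂ)).eval (δ i) = 0)
    (hLHP : ∀ i, (δ i).re < 0)
    (hamonic : a.Monic) (hda : a.natDegree = N - 1)
    (hdnz : ∀ i, (d.map (algebraMap ℝ ℂ)).eval (-δ i) ≠ 0) :
    (1 / (2 * Real.pi)) • ∫ ω : ℝ,
      ((a.map (algebraMap ℝ ℂ)).eval (-(ω * Complex.I))
        * (a.map (algebraMap ℝ ℂ)).eval (ω * Complex.I)) /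
      ((d.map (algebraMap ℝ ℂ)).eval (ω * Complex.I)
        * (d.map (algebraMap ℝ ℂ)).eval (-(ω * Complex.I)))
    = ∑ i : Fin N,
        ((a.map (algebraMap ℝ ℂ)).eval (-δ i) * (a.map (algebraMap ℝ ℂ)).eval (δ i)) /
        ((d.map (algebraMap ℝ ℂ)).derivative.eval (δ i)
          * (d.map (algebraMap ℝ ℂ)).eval (-δ i)) :=
  stmt_19_general N d a hdd δ hδ hroots hLHP hda
end
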